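/- Let K be a field of characteristic zero, let A be a finite-dimensional non-unital associative K-algebra, and let (B, η) be a universal coacting bialgebra of A. Define Θ : Hom_{K-Alg}(B, K) → End(A) by Θ(Φ)(a) = (canonical isomorphism A ⊗ K ≅ A)((id_A ⊗ Φ)(η(a))). Then: (i) Θ(Φ) is a non-unital algebra endomorphism of A for every K-algebra homomorphism Φ : B → K; (ii) Θ is bijective; (iii) Θ(ε_B) = id_A; (iv) Θ(Φ₁ ⋆ Φ₂) = Θ(Φ₁) ∘ Θ(Φ₂) for all Φ₁, Φ₂, where ⋆ is the convolution product; consequently Θ restricts to a group isomorphism from the group of convolution-invertible elements of Hom_{K-Alg}(B, K) onto the group of non-unital algebra automorphisms of A. -/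
import Mathlib


/-!
Statement 17: Let `A` be a finite-dimensional non-unital associative algebra over a field
`K` of characteristic zero and `(B, η)` a universal coacting bialgebra of `A`. Define
`Θ : Hom_{K-Alg}(B, K) → End(A)` by `Θ(Φ)(a) = (A ⊗ K ≅ A)((id_A ⊗ Φ)(η a))`. Then: (i) each
`Θ(Φ)` is a non-unital algebra endomorphism; (ii) `Θ` is a bijection onto the non-unital
algebra endomorphisms of `A`; (iii) `Θ(ε_B) = id`; (iv) `Θ` turns convolution into
composition; consequently (v) `Φ` is convolution-invertible iff `Θ(Φ)` is bijective, i.e. an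
algebra automorphism.
-/

open TensorProduct

universe u

/-- `(C₀, η)` is a universal pair for `(A, B)`. -/
def IsUniversalAlgPair (K : Type u) [Field K]
    (A : Type u) [NonUnitalRing A] [Module K A] [SMulCommClass K A A] [IsScalarTower K A A]
    (B : Type u) [NonUnitalRing B] [Module K B] [SMulCommClass K B B] [IsScalarTower K B B]
    (C₀ : Type u) [CommRing C₀] [Algebra K C₀]
    (η : B →ₙₐ[K] A ⊗[K] C₀) : Prop :=
  ∀ (C : Type u) [CommRing C] [Algebra K C], ∀ f : B →ₙₐ[K] A ⊗[K] C,
    ∃! Φ : C₀ →ₐ[K] C, ∀ x : B, f x = LinearMap.lTensor A Φ.toLinearMap (η x)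

/-- A coaction of a commutative `K`-bialgebra `B` on the non-unital associative algebra
`A`. -/
def IsAlgCoaction (K : Type u) [Field K]
    (A : Type u) [NonUnitalRing A] [Module K A] [SMulCommClass K A A] [IsScalarTower K A A]
    (B : Type u) [CommRing B] [Bialgebra K B]
    (η : A →ₙₐ[K] A ⊗[K] B) : Prop :=
  (∀ a : A, TensorProduct.rid K A
      (LinearMap.lTensor A (Coalgebra.counit (R := K) (A := B)) (η a)) = a) ∧
  ∀ a : A, LinearMap.lTensor A (Coalgebra.comul (R := K) (A := B)) (η a) =
    TensorProduct.assoc K A B B (LinearMap.rTensor B (η : A →ₗ[K] A ⊗[K] B) (η a))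

/-- The convolution product `Φ₁ ⋆ Φ₂ = mult ∘ (Φ₁ ⊗ Φ₂) ∘ Δ_B` of two `K`-algebra
homomorphisms `B → K`, as a linear map. -/
noncomputable def conv {K : Type u} [Field K] {B : Type u} [CommRing B] [Bialgebra K B]
    (Φ₁ Φ₂ : B →ₐ[K] K) : B →ₗ[K] K :=
  LinearMap.mul' K K ∘ₗ TensorProduct.map Φ₁.toLinearMap Φ₂.toLinearMap ∘ₗ
    Coalgebra.comul (R := K) (A := B)

/-- `Θ(Φ) : A → A`, the composite of `η`, `id_A ⊗ Φ` and the canonical isomorphism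
`A ⊗ K ≅ A`. -/
noncomputable def theta {K : Type u} [Field K]
    {A : Type u} [NonUnitalRing A] [Module K A] [SMulCommClass K A A] [IsScalarTower K A A]
    {B : Type u} [CommRing B] [Bialgebra K B]
    (η : A →ₙₐ[K] A ⊗[K] B) (Φ : B →ₐ[K] K) : A →ₗ[K] A :=
  (TensorProduct.rid K A).toLinearMap ∘ₗ LinearMap.lTensor A Φ.toLinearMap ∘ₗ
    (η : A →ₗ[K] A ⊗[K] B)

section AuxLemmas

variable {K : Type u} [Field K]
    {A : Type u} [NonUnitalRing A] [Module K A] [SMulCommClass K A A] [IsScalarTower K A A]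
    {B : Type u} [CommRing B] [Bialgebra K B]

/-- Build a non-unital algebra hom from a linear map that is multiplicative. -/
def NonUnitalAlgHom.ofLinear {C : Type u} [NonUnitalNonAssocSemiring C] [Module K C]
    (f : A →ₗ[K] C) (h : ∀ x y : A, f (x * y) = f x * f y) : A →ₙₐ[K] C :=
  { toFun := f, map_smul' := map_smul f, map_zero' := map_zero f,
    map_add' := map_add f, map_mul' := h }

@[simp] lemma NonUnitalAlgHom.ofLinear_apply {C : Type u} [NonUnitalNonAssocSemiring C]
    [Module K C] (f : A →ₗ[K] C) (h : ∀ x y : A, f (x * y) = f x * f y) (a : A) :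
    NonUnitalAlgHom.ofLinear f h a = f a := rfl

lemma lTensor_mul (Φ : B →ₐ[K] K) (u v : A ⊗[K] B) :
    LinearMap.lTensor A Φ.toLinearMap (u * v) =
    LinearMap.lTensor A Φ.toLinearMap u * LinearMap.lTensor A Φ.toLinearMap v := by
  induction u using TensorProduct.induction_on with
  | zero => simp
  | tmul a b =>
    induction v using TensorProduct.induction_on with
    | zero => simp
    | tmul a' b' => simp [Algebra.TensorProduct.tmul_mul_tmul]
    | add v₁ v₂ h1 h2 => simp [mul_add, h1, h2]
  | add u₁ u₂ h1 h2 => simp [add_mul, h1, h2]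

lemma rid_mul (u v : A ⊗[K] K) :
    TensorProduct.rid K A (u * v) = TensorProduct.rid K A u * TensorProduct.rid K A v := by
  induction u using TensorProduct.induction_on with
  | zero => simp
  | tmul a c =>
    induction v using TensorProduct.induction_on with
    | zero => simp
    | tmul a' c' =>
      simp [Algebra.TensorProduct.tmul_mul_tmul, smul_mul_smul_comm, mul_comm]
    | add v₁ v₂ h1 h2 => simp [mul_add, h1, h2]
  | add u₁ u₂ h1 h2 => simp [add_mul, h1, h2]

lemma theta_apply (η : A →ₙₐ[K] A ⊗[K] B) (Φ : B →ₐ[K] K) (a : A) :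
    theta η Φ a = TensorProduct.rid K A (LinearMap.lTensor A Φ.toLinearMap (η a)) := rfl

lemma theta_mul (η : A →ₙₐ[K] A ⊗[K] B) (Φ : B →ₐ[K] K) (x y : A) :
    theta η Φ (x * y) = theta η Φ x * theta η Φ y := by
  simp only [theta_apply, map_mul η, lTensor_mul, rid_mul]

/-- `(id_A ⊗ Φ) ∘ η` as a non-unital algebra hom `A → A ⊗ K`. -/
noncomputable def fofPhi (η : A →ₙₐ[K] A ⊗[K] B) (Φ : B →ₐ[K] K) :
    A →ₙₐ[K] A ⊗[K] K :=
  NonUnitalAlgHom.ofLinear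
    (LinearMap.lTensor A Φ.toLinearMap ∘ₗ (η : A →ₗ[K] A ⊗[K] B))
    (fun x y => by simp [map_mul η, lTensor_mul])

lemma fofPhi_apply (η : A →ₙₐ[K] A ⊗[K] B) (Φ : B →ₐ[K] K) (a : A) :
    fofPhi η Φ a = LinearMap.lTensor A Φ.toLinearMap (η a) := rfl

lemma lTensor_eq_rid_symm_theta (η : A →ₙₐ[K] A ⊗[K] B) (Φ : B →ₐ[K] K) (a : A) :
    LinearMap.lTensor A Φ.toLinearMap (η a) =
      (TensorProduct.rid K A).symm (theta η Φ a) := by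
  rw [theta_apply, LinearEquiv.symm_apply_apply]

lemma key2 (Φ₁ Φ₂ : B →ₐ[K] K) (b : B) (v : A ⊗[K] B) :
    TensorProduct.rid K A (LinearMap.lTensor A (LinearMap.mul' K K)
      (LinearMap.lTensor A (TensorProduct.map Φ₁.toLinearMap Φ₂.toLinearMap)
        (TensorProduct.assoc K A B B (v ⊗ₜ[K] b)))) =
    Φ₂ b • TensorProduct.rid K A (LinearMap.lTensor A Φ₁.toLinearMap v) := by
  induction v using TensorProduct.induction_on with
  | zero => simp
  | tmul a' b' =>
    simp [TensorProduct.assoc_tmul, LinearMap.mul'_apply, smul_smul, mul_comm]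
  | add v₁ v₂ h1 h2 => simp [TensorProduct.add_tmul, h1, h2, smul_add]

lemma key (η : A →ₙₐ[K] A ⊗[K] B) (Φ₁ Φ₂ : B →ₐ[K] K) (u : A ⊗[K] B) :
    TensorProduct.rid K A (LinearMap.lTensor A (LinearMap.mul' K K)
      (LinearMap.lTensor A (TensorProduct.map Φ₁.toLinearMap Φ₂.toLinearMap)
        (TensorProduct.assoc K A B B
          (LinearMap.rTensor B (η : A →ₗ[K] A ⊗[K] B) u)))) =
    theta η Φ₁ (TensorProduct.rid K A (LinearMap.lTensor A Φ₂.toLinearMap u)) := by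
  induction u using TensorProduct.induction_on with
  | zero => simp
  | tmul a b =>
    rw [LinearMap.rTensor_tmul, key2]
    simp [theta_apply, map_smul η]
  | add u₁ u₂ h1 h2 => simp [h1, h2]

lemma counitAlgHom_toLinearMap :
    (Bialgebra.counitAlgHom K B).toLinearMap = Coalgebra.counit (R := K) (A := B) := rfl

/-- The convolution of two algebra homs `B → K` as an algebra hom. -/
noncomputable def convAlgHom (Φ Ψ : B →ₐ[K] K) : B →ₐ[K] K :=
  ((Algebra.TensorProduct.lmul' K).comp
    (Algebra.TensorProduct.map Φ Ψ)).comp (Bialgebra.comulAlgHom K B)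

lemma convAlgHom_apply (Φ Ψ : B →ₐ[K] K) (b : B) :
    convAlgHom Φ Ψ b = conv Φ Ψ b := by
  have h : ∀ u : B ⊗[K] B,
      Algebra.TensorProduct.lmul' K (Algebra.TensorProduct.map Φ Ψ u) =
      LinearMap.mul' K K (TensorProduct.map Φ.toLinearMap Ψ.toLinearMap u) := by
    intro u
    induction u using TensorProduct.induction_on with
    | zero => simp
    | tmul x y => simp [LinearMap.mul'_apply]
    | add u₁ u₂ h1 h2 => simp [map_add, h1, h2]
  simp only [convAlgHom, conv, AlgHom.coe_comp, Function.comp_apply, LinearMap.coe_comp,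
    Bialgebra.comulAlgHom_apply]
  exact h _

end AuxLemmas

theorem theta_monoid_iso_onto_alg_endomorphisms
    (K : Type u) [Field K] [CharZero K]
    (A : Type u) [NonUnitalRing A] [Module K A] [SMulCommClass K A A] [IsScalarTower K A A]
    [FiniteDimensional K A]
    (B : Type u) [CommRing B] [Bialgebra K B]
    (η : A →ₙₐ[K] A ⊗[K] B)
    (hcoact : IsAlgCoaction K A B η)
    (huniv : IsUniversalAlgPair K A A B η) :
    -- (i) each `Θ(Φ)` is a non-unital algebra endomorphism of `A`
    (∀ Φ : B →ₐ[K] K, ∀ x y : A, theta η Φ (x * y) = theta η Φ x * theta η Φ y) ∧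
    -- (ii) `Θ` is a bijection onto the non-unital algebra endomorphisms of `A`
    (Function.Injective (fun Φ : B →ₐ[K] K => theta η Φ)) ∧
    (∀ f : A →ₙₐ[K] A, ∃ Φ : B →ₐ[K] K, theta η Φ = (f : A →ₗ[K] A)) ∧
    -- (iii) `Θ(ε_B) = id_A`
    (theta η (Bialgebra.counitAlgHom K B) = LinearMap.id) ∧
    -- (iv) `Θ` sends convolution products to composition
    (∀ Φ₁ Φ₂ Φ₃ : B →ₐ[K] K, (∀ b : B, Φ₃ b = conv Φ₁ Φ₂ b) →
      theta η Φ₃ = theta η Φ₁ ∘ₗ theta η Φ₂) ∧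
    -- (v) consequently, `Φ` is convolution invertible iff `Θ(Φ)` is an automorphism
    (∀ Φ : B →ₐ[K] K,
      (∃ Ψ : B →ₐ[K] K, (∀ b : B, conv Φ Ψ b = Bialgebra.counitAlgHom K B b) ∧
        (∀ b : B, conv Ψ Φ b = Bialgebra.counitAlgHom K B b)) ↔
      Function.Bijective (theta η Φ)) := by
  obtain ⟨hcounit, hcomul⟩ := hcoact
  have hthetacounit : theta η (Bialgebra.counitAlgHom K B) = LinearMap.id := by
    ext a
    simpa [theta_apply, counitAlgHom_toLinearMap] using hcounit a
  have hinj : Function.Injective (fun Φ : B →ₐ[K] K => theta η Φ) := by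
    intro Φ₁ Φ₂ h
    have h' : theta η Φ₁ = theta η Φ₂ := h
    obtain ⟨Φ, hΦ, huniq⟩ := huniv K (fofPhi η Φ₁)
    have e1 : Φ₁ = Φ := huniq Φ₁ (fun x => rfl)
    have e2 : Φ₂ = Φ := huniq Φ₂ (fun x => by
      rw [fofPhi_apply, lTensor_eq_rid_symm_theta, h', ← lTensor_eq_rid_symm_theta])
    rw [e1, e2]
  have hsurj : ∀ f : A →ₙₐ[K] A, ∃ Φ : B →ₐ[K] K, theta η Φ = (f : A →ₗ[K] A) := by
    intro f
    obtain ⟨Φ, hΦ, -⟩ := huniv K (NonUnitalAlgHom.ofLinear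
      ((TensorProduct.rid K A).symm.toLinearMap ∘ₗ (f : A →ₗ[K] A))
      (fun x y => by
        simp [map_mul f, TensorProduct.rid_symm_apply,
          Algebra.TensorProduct.tmul_mul_tmul]))
    refine ⟨Φ, ?_⟩
    ext a
    have h := hΦ a
    rw [theta_apply, ← h]
    show TensorProduct.rid K A ((TensorProduct.rid K A).symm (f a)) = f a
    exact (TensorProduct.rid K A).apply_symm_apply _
  have hconv : ∀ Φ₁ Φ₂ Φ₃ : B →ₐ[K] K, (∀ b : B, Φ₃ b = conv Φ₁ Φ₂ b) →
      theta η Φ₃ = theta η Φ₁ ∘ₗ theta η Φ₂ := by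
    intro Φ₁ Φ₂ Φ₃ h
    have hlin : Φ₃.toLinearMap = conv Φ₁ Φ₂ := LinearMap.ext h
    ext a
    rw [LinearMap.comp_apply, theta_apply, hlin, conv, LinearMap.lTensor_comp,
      LinearMap.lTensor_comp]
    simp only [LinearMap.comp_apply]
    rw [hcomul a, key]
    rfl
  refine ⟨theta_mul η, hinj, hsurj, hthetacounit, hconv, ?_⟩
  intro Φ
  constructor
  · rintro ⟨Ψ, h1, h2⟩
    have c1 : theta η (Bialgebra.counitAlgHom K B) = theta η Φ ∘ₗ theta η Ψ :=
      hconv Φ Ψ _ (fun b => (h1 b).symm)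
    have c2 : theta η (Bialgebra.counitAlgHom K B) = theta η Ψ ∘ₗ theta η Φ :=
      hconv Ψ Φ _ (fun b => (h2 b).symm)
    rw [hthetacounit] at c1 c2
    exact Function.bijective_iff_has_inverse.mpr ⟨theta η Ψ,
      fun a => by have := congrArg (fun g : A →ₗ[K] A => g a) c2; simpa using this.symm,
      fun a => by have := congrArg (fun g : A →ₗ[K] A => g a) c1; simpa using this.symm⟩
  · intro hbij
    set e := LinearEquiv.ofBijective (theta η Φ) hbij with he
    have happ : ∀ z : A, e z = theta η Φ z := fun z => rfl
    have hmul : ∀ x y : A, e.symm (x * y) = e.symm x * e.symm y := by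
      intro x y
      apply e.injective
      have h3 : e (e.symm x * e.symm y) = x * y := by
        rw [happ, theta_mul, ← happ, ← happ, e.apply_symm_apply, e.apply_symm_apply]
      rw [e.apply_symm_apply, h3]
    obtain ⟨Ψ, hΨ⟩ := hsurj (NonUnitalAlgHom.ofLinear (e.symm : A →ₗ[K] A) hmul)
    have hΨ' : theta η Ψ = (e.symm : A →ₗ[K] A) := hΨ
    have comp1 : theta η Φ ∘ₗ theta η Ψ = LinearMap.id := by
      ext a
      rw [LinearMap.comp_apply, hΨ', LinearMap.id_apply]
      show theta η Φ (e.symm a) = a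
      rw [← happ, e.apply_symm_apply]
    have comp2 : theta η Ψ ∘ₗ theta η Φ = LinearMap.id := by
      ext a
      rw [LinearMap.comp_apply, hΨ', LinearMap.id_apply]
      show e.symm (theta η Φ a) = a
      rw [← happ, e.symm_apply_apply]
    have d1 : convAlgHom Φ Ψ = Bialgebra.counitAlgHom K B := by
      apply hinj
      show theta η (convAlgHom Φ Ψ) = theta η (Bialgebra.counitAlgHom K B)
      rw [hconv Φ Ψ _ (convAlgHom_apply Φ Ψ), comp1, hthetacounit]
    have d2 : convAlgHom Ψ Φ = Bialgebra.counitAlgHom K B := by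
      apply hinj
      show theta η (convAlgHom Ψ Φ) = theta η (Bialgebra.counitAlgHom K B)
      rw [hconv Ψ Φ _ (convAlgHom_apply Ψ Φ), comp2, hthetacounit]
    exact ⟨Ψ, fun b => by rw [← convAlgHom_apply, d1],
      fun b => by rw [← convAlgHom_apply, d2]⟩
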